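/- Under the No-Boundary overlay construction, for any two vertices s, t in the same partition G_i, the global shortest distance satisfies d_G(s,t) = min( d_{G_i}(s,t), min over pairs b_1, b_2 ∈ B_i of [ d_{G_i}(s, b_1) + d_{G̃}(b_1, b_2) + d_{G_i}(b_2, t) ] ), where B_i is the boundary vertex set of G_i and G̃ is the overlay graph built with local partition distances as in the No-Boundary strategy. -/

import Mathlib

open scoped ENNReal Classical

namespace PSP

/-- A weighted undirected graph: symmetric adjacency and a weight function
with values in `ℝ≥0∞` (so weights are non-negative). -/
structure WGraph (V : Type*) where
  Adj : V → V → Prop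
  symm : ∀ {u v}, Adj u v → Adj v u
  w : V → V → ℝ≥0∞

variable {V : Type*} {ι : Type*}

/-- Sum of `f` over consecutive pairs of a list. -/
noncomputable def pairSum (f : V → V → ℝ≥0∞) : List V → ℝ≥0∞
  | a :: b :: rest => f a b + pairSum f (b :: rest)
  | _ => 0

/-- Weighted length of a walk (given as a list of vertices). -/
noncomputable def wlen (G : WGraph V) (l : List V) : ℝ≥0∞ := pairSum G.w l

/-- `l` is a walk in `G` from `s` to `t`: consecutive vertices are adjacent,
the first vertex is `s` and the last is `t`. -/
def IsWalk (G : WGraph V) (s t : V) (l : List V) : Prop :=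
  l.Chain' G.Adj ∧ l.head? = some s ∧ l.getLast? = some t

/-- Shortest-path distance in `G` (`⊤` if no walk exists). -/
noncomputable def dist (G : WGraph V) (s t : V) : ℝ≥0∞ :=
  sInf {x | ∃ l, IsWalk G s t l ∧ wlen G l = x}

/-- Induced subgraph on a vertex set `S`. -/
def induce (G : WGraph V) (S : Set V) : WGraph V where
  Adj u v := G.Adj u v ∧ u ∈ S ∧ v ∈ S
  symm h := ⟨G.symm h.1, h.2.2, h.2.1⟩
  w := G.w

/-- A partition of the vertex set is given by a function `P : V → ι`
assigning each vertex its partition index. The set of all boundary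
vertices: vertices having a neighbor in another partition. -/
def bdry (G : WGraph V) (P : V → ι) : Set V :=
  {v | ∃ u, G.Adj v u ∧ P u ≠ P v}

/-- Boundary vertices of partition `i`. -/
def bdryIn (G : WGraph V) (P : V → ι) (i : ι) : Set V :=
  {v | P v = i ∧ ∃ u, G.Adj v u ∧ P u ≠ i}

/-- The induced subgraph `G_i` of partition `i`. -/
def partGraph (G : WGraph V) (P : V → ι) (i : ι) : WGraph V :=
  induce G {x | P x = i}

/-- The No-Boundary overlay graph `G̃`: vertices are boundary vertices; for each
partition, each boundary pair gets an edge of weight equal to the *local*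
partition distance; inter-partition edges of `G` keep their original weight. -/
noncomputable def overlay (G : WGraph V) (P : V → ι) : WGraph V where
  Adj u v := (P u = P v ∧ u ∈ bdry G P ∧ v ∈ bdry G P) ∨ (P u ≠ P v ∧ G.Adj u v)
  symm := by
    rintro u v (⟨h1, h2, h3⟩ | ⟨h1, h2⟩)
    · exact Or.inl ⟨h1.symm, h3, h2⟩
    · exact Or.inr ⟨fun h => h1 h.symm, G.symm h2⟩
  w u v := if P u = P v then dist (partGraph G P (P u)) u v else G.w u v

/-- A half-connected boundary vertex: has a non-boundary neighbor in its own partition. -/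
def halfC (G : WGraph V) (P : V → ι) (b : V) : Prop :=
  b ∈ bdry G P ∧ ∃ u, G.Adj b u ∧ P u = P b ∧ u ∉ bdry G P

/-- A full-connected boundary vertex: all in-partition neighbors are boundary vertices. -/
def fullC (G : WGraph V) (P : V → ι) (b : V) : Prop :=
  b ∈ bdry G P ∧ ∀ u, G.Adj b u → P u = P b → u ∈ bdry G P

/-- The pruned overlay graph `G̃'`, with inserted boundary-pair weights `ω`:
edges among half-connected boundary pairs of the same partition (weight `ω`),
all inter-partition edges, and the original in-partition adjacent edges of
full-connected boundary vertices. -/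
noncomputable def pruned (G : WGraph V) (P : V → ι) (ω : V → V → ℝ≥0∞) : WGraph V where
  Adj u v :=
    (P u = P v ∧ halfC G P u ∧ halfC G P v) ∨
    (P u ≠ P v ∧ G.Adj u v) ∨
    (P u = P v ∧ G.Adj u v ∧ u ∈ bdry G P ∧ v ∈ bdry G P ∧ (fullC G P u ∨ fullC G P v))
  symm := by
    rintro u v (⟨h1, h2, h3⟩ | ⟨h1, h2⟩ | ⟨h1, h2, h3, h4, h5⟩)
    · exact Or.inl ⟨h1.symm, h3, h2⟩
    · exact Or.inr (Or.inl ⟨fun h => h1 h.symm, G.symm h2⟩)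
    · exact Or.inr (Or.inr ⟨h1.symm, G.symm h2, h4, h3, h5.symm⟩)
  w u v := if P u = P v ∧ halfC G P u ∧ halfC G P v then ω u v else G.w u v

/-- The augmented partition graph `G'_i`: the induced subgraph `G_i` plus, for each
boundary pair `b₁ b₂ ∈ B_i`, an inserted edge of weight `ω b₁ b₂` (taking the
minimum with an already-existing edge weight). -/
noncomputable def augment (G : WGraph V) (P : V → ι) (i : ι) (ω : V → V → ℝ≥0∞) : WGraph V where
  Adj u v := (G.Adj u v ∧ P u = i ∧ P v = i) ∨ (u ∈ bdryIn G P i ∧ v ∈ bdryIn G P i)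
  symm := by
    rintro u v (⟨h1, h2, h3⟩ | ⟨h1, h2⟩)
    · exact Or.inl ⟨G.symm h1, h3, h2⟩
    · exact Or.inr ⟨h2, h1⟩
  w u v :=
    if u ∈ bdryIn G P i ∧ v ∈ bdryIn G P i then
      (if G.Adj u v ∧ P u = i ∧ P v = i then min (ω u v) (G.w u v) else ω u v)
    else G.w u v

/-- Graph obtained from `G` by adding, for every pair `u v ∈ S`, a shortcut edge
of weight `dist G u v` (taking the minimum with an already-existing edge weight). -/
noncomputable def shortcut (G : WGraph V) (S : Set V) : WGraph V where
  Adj u v := G.Adj u v ∨ (u ∈ S ∧ v ∈ S)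
  symm := by
    rintro u v (h | ⟨h1, h2⟩)
    · exact Or.inl (G.symm h)
    · exact Or.inr ⟨h2, h1⟩
  w u v :=
    if u ∈ S ∧ v ∈ S then
      (if G.Adj u v then min (dist G u v) (G.w u v) else dist G u v)
    else G.w u v

/-- Vertex-splitting construction: each cut vertex `x ∈ X` keeps its neighbors in
group `N x 0`; for `1 ≤ i ≤ l x` a duplicate `(x, i)` is created, connected to the
vertices of `N x i` with the original weights and to `x` by a zero-weight edge. -/
noncomputable def split (G : WGraph V) (X : Set V) (N : V → ℕ → Set V) (l : V → ℕ) :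
    WGraph (V ⊕ V × ℕ) where
  Adj a b := match a, b with
    | .inl u, .inl v => G.Adj u v ∧ (u ∈ X → v ∈ N u 0) ∧ (v ∈ X → u ∈ N v 0)
    | .inl v, .inr (x, i) => x ∈ X ∧ 1 ≤ i ∧ i ≤ l x ∧ ((G.Adj x v ∧ v ∈ N x i) ∨ v = x)
    | .inr (x, i), .inl v => x ∈ X ∧ 1 ≤ i ∧ i ≤ l x ∧ ((G.Adj x v ∧ v ∈ N x i) ∨ v = x)
    | .inr _, .inr _ => False
  symm := by
    rintro (u | ⟨x, i⟩) (v | ⟨y, j⟩) h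
    · exact ⟨G.symm h.1, h.2.2, h.2.1⟩
    · exact h
    · exact h
    · exact h.elim
  w a b := match a, b with
    | .inl u, .inl v => G.w u v
    | .inl v, .inr (x, _) => if v = x then 0 else G.w x v
    | .inr (x, _), .inl v => if v = x then 0 else G.w x v
    | .inr _, .inr _ => 0


/-!
A walk from `s` to `t` either stays inside `G_i`, or it leaves `G_i`. In the second case the
vertex at which it first leaves and the vertex at which it last re-enters are boundary
vertices `b₁, b₂` of `G_i`; the pieces `s → b₁` and `b₂ → t` are walks in `G_i`, and the middle
piece costs at least `d_G(b₁, b₂) = d_{G̃}(b₁, b₂)`. Conversely, every term of the minimum bounds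
`d_G(s, t)` from above by the triangle inequality, since `G_i` is a subgraph of `G`.
-/

section Walks

variable {G : WGraph V} {s t u v b : V} {l : List V}

lemma wlen_cons_cons (a c : V) (l : List V) :
    wlen G (a :: c :: l) = G.w a c + wlen G (c :: l) := rfl

lemma not_isWalk_nil : ¬ IsWalk G s t [] := by
  simp [IsWalk]

lemma isWalk_singleton_iff : IsWalk G s t [u] ↔ u = s ∧ u = t := by
  simp [IsWalk, List.Chain']

lemma isWalk_cons_cons_iff {a c : V} :
    IsWalk G s t (a :: c :: l) ↔ a = s ∧ G.Adj a c ∧ IsWalk G c t (c :: l) := by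
  simp only [IsWalk, List.Chain', List.isChain_cons_cons, List.head?_cons, Option.some.injEq,
    List.getLast?_cons_cons, true_and]
  tauto

lemma IsWalk.exists_eq_cons (h : IsWalk G s t l) : ∃ l', l = s :: l' := by
  obtain ⟨_, hhead, _⟩ := h
  cases l with
  | nil => simp at hhead
  | cons a l' => exact ⟨l', by simpa using hhead⟩

lemma IsWalk.cons (hadj : G.Adj u v) (h : IsWalk G v t l) : IsWalk G u t (u :: l) := by
  obtain ⟨l', rfl⟩ := h.exists_eq_cons
  exact isWalk_cons_cons_iff.2 ⟨rfl, hadj, h⟩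

lemma dist_le_wlen (h : IsWalk G s t l) : dist G s t ≤ wlen G l :=
  sInf_le ⟨l, h, rfl⟩

lemma le_dist {c : ℝ≥0∞} (h : ∀ l, IsWalk G s t l → c ≤ wlen G l) : c ≤ dist G s t :=
  le_sInf fun _ ⟨l, hl, hx⟩ => hx ▸ h l hl

lemma le_add_dist {a c : ℝ≥0∞} (h : ∀ l, IsWalk G s t l → c ≤ a + wlen G l) :
    c ≤ a + dist G s t := by
  rw [dist, add_comm, ENNReal.sInf_add]
  exact le_iInf₂ fun _ ⟨l, hl, hx⟩ => hx ▸ add_comm a _ ▸ h l hl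

@[simp]
lemma dist_self (G : WGraph V) (s : V) : dist G s s = 0 :=
  le_antisymm (dist_le_wlen (isWalk_singleton_iff.2 ⟨rfl, rfl⟩)) bot_le

lemma dist_le_weight_add (hadj : G.Adj u v) : dist G u t ≤ G.w u v + dist G v t :=
  le_add_dist fun l hl => by
    obtain ⟨l', rfl⟩ := hl.exists_eq_cons
    exact dist_le_wlen (hl.cons hadj)

lemma dist_le_weight (hadj : G.Adj u v) : dist G u v ≤ G.w u v := by
  simpa using dist_le_weight_add (t := v) hadj

lemma dist_le_wlen_add :
    ∀ {s : V} {l : List V}, IsWalk G s b l → dist G s t ≤ wlen G l + dist G b t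
  | _, [], h => (not_isWalk_nil h).elim
  | _, [_], h => by
      obtain ⟨rfl, rfl⟩ := isWalk_singleton_iff.1 h
      simp [wlen, pairSum]
  | _, u :: v :: l, h => by
      obtain ⟨rfl, hadj, hwalk⟩ := isWalk_cons_cons_iff.1 h
      calc dist G u t ≤ G.w u v + dist G v t := dist_le_weight_add hadj
        _ ≤ G.w u v + (wlen G (v :: l) + dist G b t) := by
            gcongr; exact dist_le_wlen_add hwalk
        _ = wlen G (u :: v :: l) + dist G b t := by rw [wlen_cons_cons, add_assoc]

lemma dist_triangle (G : WGraph V) (s b t : V) : dist G s t ≤ dist G s b + dist G b t := by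
  conv_rhs => rw [dist, ENNReal.sInf_add]
  exact le_iInf₂ fun _ ⟨l, hl, hx⟩ => hx ▸ dist_le_wlen_add hl

end Walks

section Partition

variable {G : WGraph V} {P : V → ι} {i : ι} {s t : V} {l : List V}

lemma bdryIn_subset_bdry : bdryIn G P i ⊆ bdry G P := by
  rintro b ⟨rfl, u, hadj, hu⟩
  exact ⟨u, hadj, hu⟩

lemma dist_le_dist_partGraph (s t : V) : dist G s t ≤ dist (partGraph G P i) s t :=
  le_dist fun _ hl => dist_le_wlen ⟨hl.1.imp fun _ _ h => h.1, hl.2⟩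

lemma IsWalk.toPartGraph (h : IsWalk G s t l) (hl : ∀ v ∈ l, P v = i) :
    IsWalk (partGraph G P i) s t l :=
  ⟨h.1.imp_of_mem_imp fun a b ha hb hab => ⟨hab, hl a ha, hl b hb⟩, h.2⟩

lemma IsWalk.exists_first_exit :
    ∀ {s : V} {l : List V}, IsWalk G s t l → P s = i → (∃ v ∈ l, P v ≠ i) →
      ∃ b ∈ bdryIn G P i, ∃ l', IsWalk G b t l' ∧ (∃ v ∈ l', P v ≠ i) ∧
        dist (partGraph G P i) s b + wlen G l' ≤ wlen G l
  | _, [], h, _, _ => (not_isWalk_nil h).elim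
  | _, [_], h, hs, hout => by
      obtain ⟨rfl, -⟩ := isWalk_singleton_iff.1 h
      simp_all
  | _, u :: v :: l, h, hs, hout => by
      obtain ⟨rfl, hadj, hwalk⟩ := isWalk_cons_cons_iff.1 h
      by_cases hv : P v = i
      · have hout' : ∃ x ∈ v :: l, P x ≠ i := by
          obtain ⟨x, hx, hxi⟩ := hout
          exact ⟨x, (List.mem_cons.1 hx).resolve_left (by rintro rfl; exact hxi hs), hxi⟩
        obtain ⟨b, hb, l', hl', hout'', hle⟩ := hwalk.exists_first_exit hv hout'
        refine ⟨b, hb, l', hl', hout'', ?_⟩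
        calc dist (partGraph G P i) u b + wlen G l'
            ≤ G.w u v + dist (partGraph G P i) v b + wlen G l' := by
              gcongr; exact dist_le_weight_add (G := partGraph G P i) ⟨hadj, hs, hv⟩
          _ ≤ G.w u v + wlen G (v :: l) := by rw [add_assoc]; gcongr
          _ = wlen G (u :: v :: l) := rfl
      · exact ⟨u, ⟨hs, v, hadj, hv⟩, u :: v :: l, h, hout, by simp⟩

lemma IsWalk.exists_last_entry (ht : P t = i) :
    ∀ {s : V} {l : List V}, IsWalk G s t l → (∃ v ∈ l, P v ≠ i) →
      ∃ b ∈ bdryIn G P i, dist G s b + dist (partGraph G P i) b t ≤ wlen G l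
  | _, [], h, _ => (not_isWalk_nil h).elim
  | _, [_], h, hout => by
      obtain ⟨rfl, rfl⟩ := isWalk_singleton_iff.1 h
      simp_all
  | _, u :: v :: l, h, hout => by
      obtain ⟨rfl, hadj, hwalk⟩ := isWalk_cons_cons_iff.1 h
      by_cases hin : ∀ x ∈ v :: l, P x = i
      · have hu : P u ≠ i := by
          obtain ⟨x, hx, hxi⟩ := hout
          rcases List.mem_cons.1 hx with rfl | hx
          · exact hxi
          · exact absurd (hin x hx) hxi
        refine ⟨v, ⟨hin v List.mem_cons_self, u, G.symm hadj, hu⟩, ?_⟩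
        exact add_le_add (dist_le_weight hadj) (dist_le_wlen (hwalk.toPartGraph hin))
      · push Not at hin
        obtain ⟨b, hb, hle⟩ := hwalk.exists_last_entry ht hin
        refine ⟨b, hb, ?_⟩
        calc dist G u b + dist (partGraph G P i) b t
            ≤ G.w u v + dist G v b + dist (partGraph G P i) b t := by
              gcongr; exact dist_le_weight_add hadj
          _ ≤ G.w u v + wlen G (v :: l) := by rw [add_assoc]; gcongr
          _ = wlen G (u :: v :: l) := rfl

end Partition

/-- Theorem 2, same-partition query under No-Boundary. -/
theorem stmt2 {V ι : Type*} (G : WGraph V) (P : V → ι) (i : ι) (s t : V)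
    (hs : P s = i) (ht : P t = i)
    (hov : ∀ b1 ∈ bdry G P, ∀ b2 ∈ bdry G P,
      dist (overlay G P) b1 b2 = dist G b1 b2) :
    dist G s t =
      min (dist (partGraph G P i) s t)
        (⨅ b1 ∈ bdryIn G P i, ⨅ b2 ∈ bdryIn G P i,
          dist (partGraph G P i) s b1 + dist (overlay G P) b1 b2 +
            dist (partGraph G P i) b2 t) := by
  refine le_antisymm (le_min (dist_le_dist_partGraph s t)
    (le_iInf₂ fun b1 hb1 => le_iInf₂ fun b2 hb2 => ?_)) (le_dist fun l (hl : IsWalk G s t l) => ?_)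
  · rw [hov b1 (bdryIn_subset_bdry hb1) b2 (bdryIn_subset_bdry hb2)]
    calc dist G s t ≤ dist G s b1 + dist G b1 b2 + dist G b2 t :=
          (dist_triangle G s b2 t).trans (by gcongr; exact dist_triangle G s b1 b2)
      _ ≤ _ := by gcongr <;> exact dist_le_dist_partGraph _ _
  · by_cases hin : ∀ v ∈ l, P v = i
    · exact (min_le_left _ _).trans (dist_le_wlen (hl.toPartGraph hin))
    push Not at hin
    obtain ⟨b1, hb1, l', hl', hout, hexit⟩ := hl.exists_first_exit hs hin
    obtain ⟨b2, hb2, hentry⟩ := hl'.exists_last_entry ht hout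
    calc _ ≤ dist (partGraph G P i) s b1 + dist (overlay G P) b1 b2 +
          dist (partGraph G P i) b2 t :=
          (min_le_right _ _).trans (iInf₂_le_of_le b1 hb1 (iInf₂_le b2 hb2))
      _ = dist (partGraph G P i) s b1 + (dist G b1 b2 + dist (partGraph G P i) b2 t) := by
          rw [hov b1 (bdryIn_subset_bdry hb1) b2 (bdryIn_subset_bdry hb2), add_assoc]
      _ ≤ dist (partGraph G P i) s b1 + wlen G l' := by gcongr
      _ ≤ wlen G l := hexit

end PSP
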